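/- arXiv:1112.2412 — 3 statements merged into one kernel-verified Lean document; each statement's English description precedes it below -/
import Mathlib

section
/- If a rational number P/Q in lowest terms with gcd(Q, 10) = 1 has a purely periodic decimal expansion, then the length of the period equals the multiplicative order of 10 modulo Q, i.e., the least positive integer r with 10^r ≡ 1 (mod Q). -/
/-!
Long division of `P` by `Q` in base `b` produces remainders `r k = P * b ^ k % Q` and digits
`b * r k / Q`, linked by `Q * digit k + r (k + 1) = b * r k`. If the digits are `n`-periodic, the
differences `r (k + n) - r k` are multiplied by `b` at each step while staying below `Q` in absolute
value, so they vanish; thus `P * b ^ n ≡ P`, i.e. `b ^ n ≡ 1 (mod Q)` as `P` is a unit mod `Q`.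
Conversely `b ^ n ≡ 1` makes the remainders, hence the digits, `n`-periodic. So the periods of the
digit sequence are exactly the exponents `n` with `b ^ n = 1` in `ZMod Q`, and the least positive
one is the order of `b`.
-/

theorem Int.eq_zero_of_abs_lt_of_mul_succ {b Q : ℕ} (hb : 2 ≤ b) {e : ℕ → ℤ}
    (he : ∀ k, e (k + 1) = b * e k) (hbound : ∀ k, |e k| < Q) : e 0 = 0 := by
  have hpow : ∀ k, e k = b ^ k * e 0 := fun k => by
    induction k with
    | zero => simp
    | succ k ih => rw [he, ih]; ring
  by_contra hne
  have hQ : (Q : ℤ) < b ^ Q := by exact_mod_cast Nat.lt_pow_self (by omega)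
  have := hbound Q
  rw [hpow, abs_mul, abs_pow, Nat.abs_cast] at this
  nlinarith [Int.one_le_abs hne, pow_pos (show (0 : ℤ) < b by omega) Q]

namespace LongDivision

def rem (b P Q k : ℕ) : ℕ := P * b ^ k % Q

/-- The `(k + 1)`-st digit after the radix point of `P / Q` in base `b`. -/
def digit (b P Q k : ℕ) : ℕ := P * b ^ (k + 1) / Q % b

variable {b P Q : ℕ}

theorem rem_lt (hQ : 0 < Q) (k : ℕ) : rem b P Q k < Q := Nat.mod_lt _ hQ

theorem rem_succ (k : ℕ) : rem b P Q (k + 1) = b * rem b P Q k % Q := by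
  simp only [rem, pow_succ, Nat.mul_mod_mod]
  ring_nf

theorem digit_eq (hQ : 0 < Q) (k : ℕ) : digit b P Q k = b * rem b P Q k / Q := by
  have hsplit : P * b ^ (k + 1) = b * rem b P Q k + b * (P * b ^ k / Q) * Q := by
    rw [rem, show P * b ^ (k + 1) = b * (P * b ^ k) by ring]
    conv_lhs => rw [← Nat.mod_add_div (P * b ^ k) Q]
    ring
  rw [digit, hsplit, Nat.add_mul_div_right _ _ hQ, Nat.add_mul_mod_self_left]
  rcases Nat.eq_zero_or_pos b with rfl | hb
  · simp
  · have := rem_lt (b := b) (P := P) hQ k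
    exact Nat.mod_eq_of_lt (Nat.div_lt_of_lt_mul (by nlinarith))

theorem mul_digit_add_rem_succ (hQ : 0 < Q) (k : ℕ) :
    Q * digit b P Q k + rem b P Q (k + 1) = b * rem b P Q k := by
  rw [digit_eq hQ, rem_succ, Nat.div_add_mod]

theorem rem_eq_of_periodic (hQ : 0 < Q) (hb : 2 ≤ b) {n : ℕ}
    (hper : Function.Periodic (digit b P Q) n) : rem b P Q n = rem b P Q 0 := by
  let e : ℕ → ℤ := fun k => rem b P Q (k + n) - rem b P Q k
  have he : ∀ k, e (k + 1) = b * e k := fun k => by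
    have h₁ := mul_digit_add_rem_succ (b := b) (P := P) hQ (k + n)
    have h₂ := mul_digit_add_rem_succ (b := b) (P := P) hQ k
    rw [hper k, Nat.add_right_comm] at h₁
    zify at h₁ h₂
    linear_combination h₁ - h₂
  have hbound : ∀ k, |e k| < Q := fun k => by
    have := rem_lt (b := b) (P := P) hQ (k + n)
    have := rem_lt (b := b) (P := P) hQ k
    rw [abs_sub_lt_iff]; omega
  have := Int.eq_zero_of_abs_lt_of_mul_succ hb he hbound
  simp only [e, zero_add] at this
  omega

theorem natCast_rem (k : ℕ) : (rem b P Q k : ZMod Q) = P * b ^ k := by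
  rw [rem, ZMod.natCast_mod]; push_cast; rfl

theorem pow_eq_one_of_rem_eq (hcop : Nat.Coprime P Q) {n : ℕ}
    (h : rem b P Q n = rem b P Q 0) : (b : ZMod Q) ^ n = 1 := by
  have hP : IsUnit (P : ZMod Q) := (ZMod.isUnit_iff_coprime P Q).2 hcop
  apply hP.mul_left_cancel
  simpa [natCast_rem] using congrArg (fun r : ℕ => (r : ZMod Q)) h

theorem rem_add_eq_of_pow_eq_one {n : ℕ} (h : (b : ZMod Q) ^ n = 1) (k : ℕ) :
    rem b P Q (k + n) = rem b P Q k := by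
  rw [rem, rem, ← ZMod.natCast_eq_natCast_iff']
  push_cast
  rw [pow_add, h, mul_one]

theorem periodic_digit_iff (hQ : 0 < Q) (hb : 2 ≤ b) (hcop : Nat.Coprime P Q) (n : ℕ) :
    Function.Periodic (digit b P Q) n ↔ (b : ZMod Q) ^ n = 1 := by
  refine ⟨fun hper => pow_eq_one_of_rem_eq hcop (rem_eq_of_periodic hQ hb hper), fun h k => ?_⟩
  rw [digit_eq hQ, digit_eq hQ, rem_add_eq_of_pow_eq_one h]

end LongDivision

theorem decimal_period_eq_orderOf_general (P Q : ℕ) (hQ : 0 < Q)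
    (hcop : Nat.Coprime P Q)
    (d : ℕ → ℕ) (hd : ∀ k, d k = P * 10 ^ (k + 1) / Q % 10)
    (L : ℕ) (hL : 0 < L) (hper : ∀ k, d (k + L) = d k)
    (hmin : ∀ L', 0 < L' → (∀ k, d (k + L') = d k) → L ≤ L') :
    L = orderOf (10 : ZMod Q) := by
  obtain rfl : d = LongDivision.digit 10 P Q := funext hd
  have hperiod := LongDivision.periodic_digit_iff (b := 10) hQ (by norm_num) hcop
  refine ((orderOf_eq_iff hL).2 ⟨?_, fun m hmL hm hpow => ?_⟩).symm
  · exact_mod_cast (hperiod L).1 hper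
  · exact absurd (hmin m hm ((hperiod m).2 (by exact_mod_cast hpow))) (not_le.2 hmL)

/-- If `P/Q` is in lowest terms with `gcd(Q,10) = 1` and its decimal digit
sequence is purely periodic with minimal period `L`, then `L` equals the
multiplicative order of `10` modulo `Q`. -/
theorem decimal_period_eq_orderOf (P Q : ℕ) (hQ : 0 < Q)
    (hcop : Nat.Coprime P Q) (h10 : Nat.Coprime Q 10)
    (d : ℕ → ℕ) (hd : ∀ k, d k = P * 10 ^ (k + 1) / Q % 10)
    (L : ℕ) (hL : 0 < L) (hper : ∀ k, d (k + L) = d k)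
    (hmin : ∀ L', 0 < L' → (∀ k, d (k + L') = d k) → L ≤ L') :
    L = orderOf (10 : ZMod Q) :=
  decimal_period_eq_orderOf_general P Q hQ hcop d hd L hL hper hmin
end

section
/- There exists a constant B > 0 such that for almost every real number r (with respect to Lebesgue measure), the denominators Q_n(r) of the continued fraction convergents of r satisfy Q_n(r) < e^{Bn} for all sufficiently large n. -/
open Filter MeasureTheory GenContFract

namespace KhinAux

/-- digit sequence of the continued fraction of `r` -/
noncomputable def dig (r : ℝ) (n : ℕ) : ℕ :=
  ⌊((((GenContFract.of r).s.get? n).getD ⟨1, 1⟩).b)⌋₊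

theorem dig_spec {r : ℝ} (hr : Irrational r) (n : ℕ) :
    (GenContFract.of r).s.get? n = some ⟨1, (dig r n : ℝ)⟩ ∧ 1 ≤ dig r n := by
  have hterm : ¬(GenContFract.of r).TerminatedAt n := by
    intro h
    rcases (terminates_iff_rat r).1 ⟨n, h⟩ with ⟨q, rfl⟩
    exact hr ⟨q, rfl⟩
  obtain ⟨gp, hgp⟩ := Option.ne_none_iff_exists'.1 hterm
  obtain ⟨ha, z, hz⟩ := of_partNum_eq_one_and_exists_int_partDen_eq hgp
  have hb1 : (1 : ℝ) ≤ gp.b := of_one_le_get?_partDen (partDen_eq_s_b hgp)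
  have hz1 : (1 : ℤ) ≤ z := by exact_mod_cast hz ▸ hb1
  have hdig : dig r n = z.toNat := by
    simp only [dig, hgp, Option.getD_some, hz, ← Int.floor_toNat, Int.floor_intCast]
  have hzr : ((dig r n : ℕ) : ℝ) = gp.b := by
    rw [hdig, hz]
    exact_mod_cast congrArg (fun x : ℤ => (x : ℝ)) (Int.toNat_of_nonneg (le_trans zero_le_one hz1))
  constructor
  · rw [hgp]
    congr 1
    cases gp with
    | mk a b => simp_all
  · rw [hdig]; omega


/-- abstract denominator recursion -/
def QK (f : ℕ → ℕ) : ℕ → ℕ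
  | 0 => 1
  | 1 => f 0
  | (n + 2) => f (n + 1) * QK f (n + 1) + QK f n

/-- abstract numerator recursion -/
def PK (f : ℕ → ℕ) : ℕ → ℕ
  | 0 => 0
  | 1 => 1
  | (n + 2) => f (n + 1) * PK f (n + 1) + PK f n

theorem QK_congr {f g : ℕ → ℕ} : ∀ n, (∀ i < n, f i = g i) → QK f n = QK g n
  | 0, _ => rfl
  | 1, h => by simp [QK, h 0 one_pos]
  | (n + 2), h => by
      simp only [QK, h (n+1) (by omega),
        QK_congr (n+1) (fun i hi => h i (by omega)), QK_congr n (fun i hi => h i (by omega))]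

theorem PK_congr {f g : ℕ → ℕ} : ∀ n, (∀ i < n, f i = g i) → PK f n = PK g n
  | 0, _ => rfl
  | 1, h => rfl
  | (n + 2), h => by
      simp only [PK, h (n+1) (by omega),
        PK_congr (n+1) (fun i hi => h i (by omega)), PK_congr n (fun i hi => h i (by omega))]

theorem QK_mono {f : ℕ → ℕ} (hf : ∀ i, 1 ≤ f i) : ∀ n, QK f n ≤ QK f (n + 1)
  | 0 => by simpa [QK] using hf 0
  | (n + 1) => by
      have := QK_mono hf n
      calc QK f (n+1) = 1 * QK f (n+1) := (one_mul _).symm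
      _ ≤ f (n+1) * QK f (n+1) + QK f n := by
          have := hf (n+1); exact le_add_of_le_of_nonneg (Nat.mul_le_mul_right _ this) (by omega)
      _ = QK f (n + 2) := rfl

theorem one_le_QK {f : ℕ → ℕ} (hf : ∀ i, 1 ≤ f i) : ∀ n, 1 ≤ QK f n
  | 0 => le_refl _
  | (n + 1) => le_trans (one_le_QK hf n) (QK_mono hf n)

theorem prod_le_QK {f : ℕ → ℕ} (hf : ∀ i, 1 ≤ f i) :
    ∀ n, (∏ i ∈ Finset.range n, f i) ≤ QK f n
  | 0 => le_refl _
  | 1 => by simp [QK]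
  | (n + 2) => by
      rw [Finset.prod_range_succ]
      calc (∏ i ∈ Finset.range (n+1), f i) * f (n+1) ≤ QK f (n+1) * f (n+1) :=
            Nat.mul_le_mul_right _ (prod_le_QK hf (n+1))
      _ ≤ f (n+1) * QK f (n+1) + QK f n := by rw [Nat.mul_comm]; omega
      _ = QK f (n + 2) := rfl

theorem QK_le_prod {f : ℕ → ℕ} (hf : ∀ i, 1 ≤ f i) :
    ∀ n, QK f n ≤ ∏ i ∈ Finset.range n, (f i + 1)
  | 0 => le_refl _
  | 1 => by simp [QK]
  | (n + 2) => by
      rw [Finset.prod_range_succ]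
      have h1 : QK f n ≤ QK f (n+1) := QK_mono hf n
      calc QK f (n+2) = f (n+1) * QK f (n+1) + QK f n := rfl
      _ ≤ (f (n+1) + 1) * QK f (n+1) := by nlinarith
      _ ≤ (f (n+1) + 1) * ∏ i ∈ Finset.range (n+1), (f i + 1) :=
            Nat.mul_le_mul_left _ (QK_le_prod hf (n+1))
      _ = (∏ i ∈ Finset.range (n+1), (f i + 1)) * (f (n+1) + 1) := Nat.mul_comm _ _

theorem dens_eq_QK {r : ℝ} (hr : Irrational r) : ∀ n,
    (GenContFract.of r).dens n = (QK (dig r) n : ℝ)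
  | 0 => by simp [QK]
  | 1 => by
      rw [first_den_eq (dig_spec hr 0).1]; rfl
  | (n + 2) => by
      have h := dens_recurrence (g := GenContFract.of r) (dig_spec hr (n+1)).1
        (dens_eq_QK hr n) (dens_eq_QK hr (n+1))
      rw [h]; show _ * _ + 1 * _ = _
      push_cast [QK]; ring

theorem nums_eq_PK {r : ℝ} (hr : Irrational r) (hr0 : r ∈ Set.Ico (0:ℝ) 1) : ∀ n,
    (GenContFract.of r).nums n = (PK (dig r) n : ℝ)
  | 0 => by
      rw [zeroth_num_eq_h, of_h_eq_floor]
      simp [PK, Int.floor_eq_zero_iff.2 hr0]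
  | 1 => by
      rw [first_num_eq (dig_spec hr 0).1, of_h_eq_floor]
      simp [PK, Int.floor_eq_zero_iff.2 hr0]
  | (n + 2) => by
      have h := nums_recurrence (g := GenContFract.of r) (dig_spec hr (n+1)).1
        (nums_eq_PK hr hr0 n) (nums_eq_PK hr hr0 (n+1))
      rw [h]; show _ * _ + 1 * _ = _
      push_cast [PK]; ring


theorem dig_one_le {r : ℝ} (hr : Irrational r) (i : ℕ) : 1 ≤ dig r i := (dig_spec hr i).2

theorem approx {r : ℝ} (hr : Irrational r) (hr0 : r ∈ Set.Ico (0:ℝ) 1) (n : ℕ) :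
    |r - (PK (dig r) n : ℝ) / (QK (dig r) n : ℝ)| ≤ 1 / ((QK (dig r) n : ℝ))^2 := by
  have hterm : ¬(GenContFract.of r).TerminatedAt n := by
    intro h
    simpa [GenContFract.TerminatedAt, Stream'.Seq.TerminatedAt, (dig_spec hr n).1] using h
  have h1 := abs_sub_convs_le (v := r) (n := n) hterm
  rw [conv_eq_num_div_den, nums_eq_PK hr hr0 n, dens_eq_QK hr n, dens_eq_QK hr (n+1)] at h1
  refine h1.trans ?_
  have hq : (1:ℝ) ≤ (QK (dig r) n : ℝ) := by exact_mod_cast one_le_QK (dig_one_le hr) n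
  have hq2 : ((QK (dig r) n : ℝ)) ≤ (QK (dig r) (n+1) : ℝ) := by
    exact_mod_cast QK_mono (dig_one_le hr) n
  rw [sq]
  apply one_div_le_one_div_of_le (by nlinarith) (by nlinarith)

theorem s_fract (v : ℝ) : (GenContFract.of (Int.fract v)).s = (GenContFract.of v).s := by
  by_cases h : Int.fract v = 0
  · have hv : v = ((⌊v⌋ : ℤ) : ℝ) := by
      have := Int.fract_add_floor v; linarith [this, h]
    rw [hv, of_s_of_int, show Int.fract ((⌊v⌋:ℤ):ℝ) = ((0:ℤ):ℝ) by
      rw [← hv, h]; norm_num]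
    rw [of_s_of_int]
  · ext1 n
    cases n with
    | zero =>
        have h2 : Int.fract (Int.fract v) ≠ 0 := by rwa [Int.fract_fract]
        show (GenContFract.of (Int.fract v)).s.head = (GenContFract.of v).s.head
        rw [of_s_head h2, of_s_head h, Int.fract_fract]
    | succ n =>
        rw [of_s_succ, of_s_succ, Int.fract_fract]

theorem contsAux_b_congr {g1 g2 : GenContFract ℝ} (hs : g1.s = g2.s) :
    ∀ n, (g1.contsAux n).b = (g2.contsAux n).b
  | 0 => rfl
  | 1 => rfl
  | (n + 2) => by
      have h1 := contsAux_b_congr hs n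
      have h2 := contsAux_b_congr hs (n + 1)
      show (GenContFract.contsAux g1 (n+2)).b = (GenContFract.contsAux g2 (n+2)).b
      simp only [GenContFract.contsAux, hs]
      cases hgp : g2.s.get? n with
      | none => simpa using h2
      | some gp => simp [GenContFract.nextConts, GenContFract.nextDen, h1, h2]

theorem dens_fract (v : ℝ) (n : ℕ) :
    (GenContFract.of (Int.fract v)).dens n = (GenContFract.of v).dens n :=
  contsAux_b_congr (s_fract v) (n + 1)


/-! ### Measure-theoretic part -/

noncomputable def hfun (a : ℕ) : ENNReal :=
  if a = 0 then 0 else ENNReal.ofReal ((a : ℝ) ^ (-(3/2 : ℝ)))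

noncomputable def rS : ℝ := ∑' a : ℕ, ((a : ℝ) ^ (-(3/2 : ℝ)))

theorem rS_summable : Summable (fun a : ℕ => ((a : ℝ) ^ (-(3/2 : ℝ)))) :=
  Real.summable_nat_rpow.2 (by norm_num)

theorem rS_nonneg : 0 ≤ rS :=
  tsum_nonneg fun a => Real.rpow_nonneg (Nat.cast_nonneg a) _

theorem hfun_tsum_le : (∑' a : ℕ, hfun a) ≤ ENNReal.ofReal rS := by
  rw [rS, ENNReal.ofReal_tsum_of_nonneg (fun a => Real.rpow_nonneg (Nat.cast_nonneg a) _)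
    rS_summable]
  refine ENNReal.tsum_le_tsum fun a => ?_
  unfold hfun
  split <;> simp

theorem tsum_pi_prod (h : ℕ → ENNReal) :
    ∀ n, (∑' t : Fin n → ℕ, ∏ i, h (t i)) = (∑' a : ℕ, h a) ^ n
  | 0 => by
      rw [tsum_eq_single (fun i => i.elim0) (fun b hb =>
        absurd (Subsingleton.elim b _) hb)]
      simp
  | (n + 1) => by
      have he := (Fin.consEquiv (fun _ : Fin (n+1) => ℕ)).tsum_eq
        (fun t : Fin (n+1) → ℕ => ∏ i, h (t i))
      rw [← he]
      have : ∀ p : ℕ × (Fin n → ℕ),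
          (∏ i, h ((Fin.consEquiv (fun _ : Fin (n+1) => ℕ)) p i))
            = h p.1 * ∏ i, h (p.2 i) := by
        intro p
        rw [Fin.prod_univ_succ]
        simp [Fin.consEquiv]
      rw [tsum_congr this,
        ENNReal.tsum_prod (f := fun (a : ℕ) (b : Fin n → ℕ) => h a * ∏ i, h (b i))]
      simp_rw [ENNReal.tsum_mul_left, ENNReal.tsum_mul_right]
      rw [tsum_pi_prod h n, pow_succ]
      ring

noncomputable def Kc : ℝ := 2 * (rS + 1)

theorem Kc_ge_two : 2 ≤ Kc := by unfold Kc; nlinarith [rS_nonneg]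

noncomputable def Bc : ℝ := Real.log (8 * Kc ^ 2)

theorem exp_Bc : Real.exp Bc = 8 * Kc ^ 2 :=
  Real.exp_log (by nlinarith [Kc_ge_two])

theorem Bc_pos : 0 < Bc :=
  Real.log_pos (by nlinarith [Kc_ge_two])


/-- extension of a finite tuple by 1 -/
def extF (n : ℕ) (t : Fin n → ℕ) : ℕ → ℕ := fun i => if h : i < n then t ⟨i, h⟩ else 1

def Cond (n : ℕ) (t : Fin n → ℕ) : Prop :=
  (∀ i, 1 ≤ t i) ∧ Real.exp (Bc * n) ≤ ∏ i, ((t i : ℝ) + 1)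

noncomputable def Sset (n : ℕ) : Set ℝ :=
  ⋃ (t : Fin n → ℕ) (_ : Cond n t),
    Metric.closedBall ((PK (extF n t) n : ℝ) / (QK (extF n t) n : ℝ))
      (1 / ((QK (extF n t) n : ℝ)) ^ 2)

theorem extF_one_le {n : ℕ} {t : Fin n → ℕ} (ht : ∀ i, 1 ≤ t i) (i : ℕ) :
    1 ≤ extF n t i := by
  unfold extF; split
  · exact ht _
  · exact le_refl _

theorem prod_extF {n : ℕ} (t : Fin n → ℕ) (g : ℕ → ℕ) :
    (∏ i ∈ Finset.range n, g (extF n t i)) = ∏ i : Fin n, g (t i) := by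
  rw [← Fin.prod_univ_eq_prod_range]
  refine Finset.prod_congr rfl fun i _ => ?_
  congr 1
  simp [extF, i.isLt]

theorem key_real {n : ℕ} {t : Fin n → ℕ} (hC : Cond n t) :
    2 * (1 / ((QK (extF n t) n : ℝ)) ^ 2)
      ≤ 2 * (1 / (2 * Kc)) ^ n * ∏ i, ((t i : ℝ) ^ (-(3/2 : ℝ))) := by
  obtain ⟨ht1, ht2⟩ := hC
  set P : ℝ := ∏ i : Fin n, (t i : ℝ) with hPdef
  have htpos : ∀ i : Fin n, (1:ℝ) ≤ (t i : ℝ) := fun i => by exact_mod_cast ht1 i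
  have hP1 : (1:ℝ) ≤ P := by
    rw [hPdef]
    calc (1:ℝ) = ∏ _i : Fin n, (1:ℝ) := by simp
    _ ≤ ∏ i : Fin n, (t i : ℝ) :=
        Finset.prod_le_prod (fun i _ => zero_le_one) (fun i _ => htpos i)
  have hPpos : (0:ℝ) < P := lt_of_lt_of_le one_pos hP1
  have hKpos : (0:ℝ) < 2 * Kc := by linarith [Kc_ge_two]
  -- P ≤ Q
  have hPQ : P ≤ (QK (extF n t) n : ℝ) := by
    have h1 : (∏ i ∈ Finset.range n, extF n t i) ≤ QK (extF n t) n :=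
      prod_le_QK (extF_one_le ht1) n
    have h2 : (∏ i ∈ Finset.range n, extF n t i) = ∏ i : Fin n, t i := prod_extF t id
    have h3 : (∏ i : Fin n, t i) ≤ QK (extF n t) n := h2 ▸ h1
    have h4 : P = ((∏ i : Fin n, t i : ℕ) : ℝ) := by rw [hPdef]; push_cast; rfl
    rw [h4]
    exact_mod_cast h3
  -- lower bound for P
  have hPlow : ((2 * Kc) ^ 2) ^ n ≤ P := by
    have h2 : ∏ i : Fin n, ((t i : ℝ) + 1) ≤ 2 ^ n * P := by
      calc ∏ i : Fin n, ((t i : ℝ) + 1) ≤ ∏ i : Fin n, (2 * (t i : ℝ)) :=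
            Finset.prod_le_prod (fun i _ => by positivity) (fun i _ => by linarith [htpos i])
      _ = 2 ^ n * P := by
            rw [Finset.prod_mul_distrib, Finset.prod_const, Finset.card_univ,
              Fintype.card_fin, hPdef]
    have h3 : Real.exp (Bc * n) = (8 * Kc ^ 2) ^ n := by
      rw [mul_comm Bc (n:ℝ), Real.exp_nat_mul, exp_Bc]
    have h4 : (2:ℝ) ^ n * ((2 * Kc) ^ 2) ^ n ≤ 2 ^ n * P := by
      calc (2:ℝ) ^ n * ((2 * Kc) ^ 2) ^ n = (8 * Kc ^ 2) ^ n := by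
            rw [← mul_pow]; congr 1; ring
      _ = Real.exp (Bc * n) := h3.symm
      _ ≤ ∏ i : Fin n, ((t i : ℝ) + 1) := ht2
      _ ≤ 2 ^ n * P := h2
    exact le_of_mul_le_mul_left h4 (by positivity)
  -- rpow computations
  have hP2 : 1 / ((QK (extF n t) n : ℝ)) ^ 2 ≤ 1 / P ^ 2 :=
    one_div_le_one_div_of_le (by positivity) (by nlinarith)
  have hsplit : 1 / P ^ 2 = P ^ (-(1/2 : ℝ)) * P ^ (-(3/2 : ℝ)) := by
    have e0 : (-(1/2 : ℝ)) + (-(3/2 : ℝ)) = -2 := by norm_num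
    rw [← Real.rpow_add hPpos, e0, Real.rpow_neg hPpos.le,
      show ((2:ℝ)) = ((2:ℕ):ℝ) by norm_num, Real.rpow_natCast, one_div]
  have hhalf : P ^ (-(1/2 : ℝ)) ≤ (1 / (2 * Kc)) ^ n := by
    have hb : (2 * Kc) ^ n ≤ P ^ ((1/2 : ℝ)) := by
      have h5 : ((2 * Kc) ^ (2 * n) : ℝ) ≤ P := by rw [pow_mul]; exact hPlow
      calc (2 * Kc) ^ n = ((2 * Kc : ℝ) ^ (2 * n)) ^ ((1/2 : ℝ)) := by
            rw [← Real.rpow_natCast (2 * Kc) (2 * n), ← Real.rpow_mul hKpos.le,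
              ← Real.rpow_natCast (2 * Kc) n]
            congr 1; push_cast; ring
      _ ≤ P ^ ((1/2 : ℝ)) := Real.rpow_le_rpow (by positivity) h5 (by norm_num)
    rw [Real.rpow_neg hPpos.le]
    rw [show (1 / (2 * Kc)) ^ n = ((2 * Kc : ℝ) ^ n)⁻¹ by rw [one_div, inv_pow]]
    exact inv_anti₀ (by positivity) hb
  have h32 : P ^ (-(3/2 : ℝ)) = ∏ i, ((t i : ℝ) ^ (-(3/2 : ℝ))) :=
    (Real.finset_prod_rpow _ _ (fun i _ => le_trans zero_le_one (htpos i)) _).symm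
  calc 2 * (1 / ((QK (extF n t) n : ℝ)) ^ 2) ≤ 2 * (1 / P ^ 2) := by linarith
  _ = 2 * (P ^ (-(1/2 : ℝ)) * P ^ (-(3/2 : ℝ))) := by rw [hsplit]
  _ ≤ 2 * ((1 / (2 * Kc)) ^ n * P ^ (-(3/2 : ℝ))) := by
      have := Real.rpow_nonneg hPpos.le (-(3/2 : ℝ))
      nlinarith [hhalf]
  _ = 2 * (1 / (2 * Kc)) ^ n * ∏ i, ((t i : ℝ) ^ (-(3/2 : ℝ))) := by rw [h32]; ring


theorem ball_bound {n : ℕ} {t : Fin n → ℕ} (hC : Cond n t) :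
    volume (Metric.closedBall ((PK (extF n t) n : ℝ) / (QK (extF n t) n : ℝ))
        (1 / ((QK (extF n t) n : ℝ)) ^ 2))
      ≤ ENNReal.ofReal 2 * ENNReal.ofReal (1 / (2 * Kc)) ^ n * ∏ i, hfun (t i) := by
  rw [Real.volume_closedBall]
  have hkey := key_real hC
  have hK : (0:ℝ) ≤ 1 / (2 * Kc) := by
    have := Kc_ge_two; positivity
  calc ENNReal.ofReal (2 * (1 / ((QK (extF n t) n : ℝ)) ^ 2))
      ≤ ENNReal.ofReal (2 * (1 / (2 * Kc)) ^ n * ∏ i, ((t i : ℝ) ^ (-(3/2 : ℝ)))) :=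
        ENNReal.ofReal_le_ofReal (by linarith)
  _ = ENNReal.ofReal 2 * ENNReal.ofReal ((1 / (2 * Kc)) ^ n)
        * ENNReal.ofReal (∏ i, ((t i : ℝ) ^ (-(3/2 : ℝ)))) := by
      rw [← ENNReal.ofReal_mul (by norm_num), ← ENNReal.ofReal_mul (by positivity)]
  _ = ENNReal.ofReal 2 * ENNReal.ofReal (1 / (2 * Kc)) ^ n * ∏ i, hfun (t i) := by
      rw [ENNReal.ofReal_pow hK]
      congr 1
      rw [ENNReal.ofReal_prod_of_nonneg
        (fun i _ => Real.rpow_nonneg (Nat.cast_nonneg _) _)]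
      refine Finset.prod_congr rfl fun i _ => ?_
      unfold hfun
      rw [if_neg (by have := hC.1 i; omega)]

theorem meas_Sset (n : ℕ) :
    volume (Sset n) ≤ ENNReal.ofReal 2 * ENNReal.ofReal (4⁻¹ : ℝ) ^ n := by
  have hb : ∀ t : Fin n → ℕ,
      volume (⋃ (_ : Cond n t),
        Metric.closedBall ((PK (extF n t) n : ℝ) / (QK (extF n t) n : ℝ))
          (1 / ((QK (extF n t) n : ℝ)) ^ 2))
      ≤ ENNReal.ofReal 2 * ENNReal.ofReal (1 / (2 * Kc)) ^ n * ∏ i, hfun (t i) := by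
    intro t
    by_cases hC : Cond n t
    · refine le_trans (measure_mono (Set.iUnion_subset fun _ => subset_rfl)) ?_
      exact ball_bound hC
    · refine le_trans (measure_mono (Set.iUnion_subset (t := (∅ : Set ℝ)) fun h => absurd h hC)) ?_
      simp
  calc volume (Sset n) ≤ ∑' t : Fin n → ℕ, volume (⋃ (_ : Cond n t),
        Metric.closedBall ((PK (extF n t) n : ℝ) / (QK (extF n t) n : ℝ))
          (1 / ((QK (extF n t) n : ℝ)) ^ 2)) := measure_iUnion_le _
  _ ≤ ∑' t : Fin n → ℕ,
        ENNReal.ofReal 2 * ENNReal.ofReal (1 / (2 * Kc)) ^ n * ∏ i, hfun (t i) :=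
      ENNReal.tsum_le_tsum hb
  _ = ENNReal.ofReal 2 * ENNReal.ofReal (1 / (2 * Kc)) ^ n * ∑' t : Fin n → ℕ,
        ∏ i, hfun (t i) := ENNReal.tsum_mul_left
  _ = ENNReal.ofReal 2 * (ENNReal.ofReal (1 / (2 * Kc)) * ∑' a : ℕ, hfun a) ^ n := by
      rw [tsum_pi_prod hfun n, mul_assoc, ← mul_pow]
  _ ≤ ENNReal.ofReal 2 * ENNReal.ofReal (4⁻¹ : ℝ) ^ n := by
      gcongr
      calc ENNReal.ofReal (1 / (2 * Kc)) * ∑' a : ℕ, hfun a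
          ≤ ENNReal.ofReal (1 / (2 * Kc)) * ENNReal.ofReal (Kc / 2) := by
            gcongr
            refine hfun_tsum_le.trans (ENNReal.ofReal_le_ofReal ?_)
            unfold Kc; linarith [rS_nonneg]
      _ = ENNReal.ofReal ((1 / (2 * Kc)) * (Kc / 2)) := by
            rw [ENNReal.ofReal_mul (by have := Kc_ge_two; positivity)]
      _ = ENNReal.ofReal (4⁻¹ : ℝ) := by
            congr 1
            have : Kc ≠ 0 := by have := Kc_ge_two; linarith
            field_simp
            ring

theorem sum_meas_ne_top : (∑' n : ℕ, volume (Sset n)) ≠ ⊤ := by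
  have h1 : (∑' n : ℕ, volume (Sset n))
      ≤ ∑' n : ℕ, ENNReal.ofReal 2 * ENNReal.ofReal (4⁻¹ : ℝ) ^ n :=
    ENNReal.tsum_le_tsum meas_Sset
  have h2 : (∑' n : ℕ, ENNReal.ofReal 2 * ENNReal.ofReal (4⁻¹ : ℝ) ^ n)
      = ENNReal.ofReal 2 * (1 - ENNReal.ofReal (4⁻¹ : ℝ))⁻¹ := by
    rw [ENNReal.tsum_mul_left, ENNReal.tsum_geometric]
  refine ne_top_of_le_ne_top ?_ h1
  rw [h2]
  refine ENNReal.mul_ne_top ENNReal.ofReal_ne_top (ENNReal.inv_ne_top.2 ?_)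
  have : ENNReal.ofReal (4⁻¹ : ℝ) < 1 := ENNReal.ofReal_lt_one.2 (by norm_num)
  simp only [ne_eq, tsub_eq_zero_iff_le]
  exact fun h => absurd (lt_of_lt_of_le this h) (lt_irrefl _)

theorem mem_Sset {r : ℝ} {n : ℕ} (hr : Irrational r) (hr0 : r ∈ Set.Ico (0:ℝ) 1)
    (hn : Real.exp (Bc * n) ≤ (GenContFract.of r).dens n) : r ∈ Sset n := by
  set t : Fin n → ℕ := fun i => dig r i with ht
  have hagree : ∀ i < n, extF n t i = dig r i := by
    intro i hi; simp [extF, hi, ht]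
  have hQ : QK (extF n t) n = QK (dig r) n := QK_congr n hagree
  have hP : PK (extF n t) n = PK (dig r) n := PK_congr n hagree
  have hcond : Cond n t := by
    refine ⟨fun i => dig_one_le hr i, ?_⟩
    have h1 : (GenContFract.of r).dens n = (QK (dig r) n : ℝ) := dens_eq_QK hr n
    have h2 : QK (dig r) n ≤ ∏ i ∈ Finset.range n, (dig r i + 1) :=
      QK_le_prod (dig_one_le hr) n
    have h3 : ((∏ i ∈ Finset.range n, (dig r i + 1) : ℕ) : ℝ)
        = ∏ i : Fin n, ((t i : ℝ) + 1) := by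
      push_cast
      rw [Fin.prod_univ_eq_prod_range (fun i => ((dig r i : ℝ) + 1)) n]
    calc Real.exp (Bc * n) ≤ (GenContFract.of r).dens n := hn
    _ = (QK (dig r) n : ℝ) := h1
    _ ≤ ((∏ i ∈ Finset.range n, (dig r i + 1) : ℕ) : ℝ) := by exact_mod_cast h2
    _ = ∏ i : Fin n, ((t i : ℝ) + 1) := h3
  refine Set.mem_iUnion.2 ⟨t, Set.mem_iUnion.2 ⟨hcond, ?_⟩⟩
  rw [Metric.mem_closedBall, Real.dist_eq, hQ, hP]
  exact approx hr hr0 n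

theorem ae_Ico : ∀ᵐ x : ℝ, Irrational x →
    x ∈ Set.Ico (0:ℝ) 1 → ∀ᶠ n in atTop, (GenContFract.of x).dens n < Real.exp (Bc * n) := by
  filter_upwards [MeasureTheory.ae_eventually_notMem sum_meas_ne_top] with x hx hirr hx0
  filter_upwards [hx] with n hn
  by_contra hcon
  push_neg at hcon
  exact hn (mem_Sset hirr hx0 hcon)

theorem ae_irrational : ∀ᵐ x : ℝ, Irrational x := by
  rw [ae_iff]
  have : {x : ℝ | ¬ Irrational x} = Set.range ((↑) : ℚ → ℝ) := by
    ext x; simp [Irrational]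
  rw [this]
  exact (Set.countable_range _).measure_zero _

theorem ae_global : ∀ᵐ r : ℝ, ∀ᶠ n in atTop,
    (GenContFract.of r).dens n < Real.exp (Bc * n) := by
  set N : Set ℝ := {x | ¬ (Irrational x ∧
    (Irrational x → x ∈ Set.Ico (0:ℝ) 1 →
      ∀ᶠ n in atTop, (GenContFract.of x).dens n < Real.exp (Bc * n)))} with hN
  have hNnull : volume N = 0 := by
    have := ae_irrational.and ae_Ico
    rw [ae_iff] at this
    exact this
  rw [ae_iff]
  refine measure_mono_null (fun r hr => ?_) (measure_iUnion_null fun k : ℤ =>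
    (measure_preimage_add_right volume (-(k:ℝ)) N).trans hNnull)
  simp only [Set.mem_setOf_eq] at hr
  refine Set.mem_iUnion.2 ⟨⌊r⌋, ?_⟩
  show r + -((⌊r⌋ : ℤ) : ℝ) ∈ N
  have hfr : r + -((⌊r⌋ : ℤ) : ℝ) = Int.fract r := by rw [Int.fract]; ring
  rw [hfr, hN]
  simp only [Set.mem_setOf_eq]
  rintro ⟨hirr, himp⟩
  refine hr ?_
  have hfr01 : Int.fract r ∈ Set.Ico (0:ℝ) 1 := ⟨Int.fract_nonneg r, Int.fract_lt_one r⟩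
  have := himp hirr hfr01
  filter_upwards [this] with n hn
  rwa [dens_fract r n] at hn

end KhinAux

/-- There is a constant `B > 0` such that for almost every real `r`, the
continued fraction convergent denominators satisfy `Q_n(r) < e^{Bn}` for all
sufficiently large `n`. -/
theorem khinchin_exponential_denominator_bound :
    ∃ B : ℝ, 0 < B ∧ ∀ᵐ r : ℝ, ∀ᶠ n : ℕ in atTop,
      (GenContFract.of r).dens n < Real.exp (B * n) := by
  exact ⟨KhinAux.Bc, KhinAux.Bc_pos, KhinAux.ae_global⟩
end

section
/- If an increasing sequence of positive integers b_n satisfies b_{n+1} ≥ b_n^3 for all sufficiently large n and b_n ≥ 2, then the sum r = ∑_n 1/b_n is irrational. -/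
/-!
If `∑ 1/bₙ = p/q`, multiplying by the product `dₙ = b₀ ⋯ bₙ` of the first denominators turns the
partial sum into an integer, so `q dₙ` times the tail `∑_{m>n} 1/b_m` is a positive integer.
But the tail is at most `2/b_{n+1} ≤ 2/bₙ³`, while cubic growth gives `dₙ ≤ C bₙ²` for a constant
`C`, so `q dₙ` times the tail is at most `2qC/bₙ < 1` once `n` is large.
-/

open Finset

theorem irrational_of_forall_exists_approx {x : ℝ}
    (h : ∀ q : ℕ, ∃ (d : ℕ) (a : ℤ), 0 < d * x - a ∧ q * (d * x - a) < 1) : Irrational x := by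
  rintro ⟨r, rfl⟩
  obtain ⟨d, a, hpos, hlt⟩ := h r.den
  have hr : (r.num : ℝ) = r.den * r := by exact_mod_cast r.den_mul_eq_num.symm
  have hz : ((d * r.num - r.den * a : ℤ) : ℝ) = r.den * (d * r - a) := by
    push_cast
    rw [hr]
    ring
  have hz0 : (0 : ℤ) < d * r.num - r.den * a := by
    exact_mod_cast hz ▸ mul_pos (Nat.cast_pos.mpr r.den_pos) hpos
  have hz1 : d * r.num - r.den * a < (1 : ℤ) := by exact_mod_cast hz ▸ hlt
  omega

section HalvingSeries

variable {u : ℕ → ℝ}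

theorem le_pow_half_mul_of_succ_le_half (h : ∀ n, u (n + 1) ≤ u n / 2) (n : ℕ) :
    u n ≤ (1 / 2) ^ n * u 0 :=
  le_geom (by norm_num) n fun k _ => by linarith [h k]

theorem summable_of_succ_le_half (h0 : ∀ n, 0 ≤ u n) (h : ∀ n, u (n + 1) ≤ u n / 2) :
    Summable u :=
  summable_geometric_two.mul_right (u 0) |>.of_nonneg_of_le h0
    (le_pow_half_mul_of_succ_le_half h)

theorem tsum_le_two_mul_of_succ_le_half (h0 : ∀ n, 0 ≤ u n) (h : ∀ n, u (n + 1) ≤ u n / 2) :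
    ∑' n, u n ≤ 2 * u 0 :=
  calc ∑' n, u n ≤ ∑' n, (1 / 2 : ℝ) ^ n * u 0 :=
        (summable_of_succ_le_half h0 h).tsum_le_tsum (le_pow_half_mul_of_succ_le_half h)
          (summable_geometric_two.mul_right _)
    _ = 2 * u 0 := by rw [tsum_mul_right, tsum_geometric_two]

end HalvingSeries

theorem prod_mul_tsum_sub_eq_prod_mul_tsum_nat_add {b : ℕ → ℕ} {m : ℕ}
    (hb : ∀ i ∈ range m, b i ≠ 0) (hs : Summable fun n => (1 : ℝ) / b n) :
    (∏ i ∈ range m, b i : ℕ) * ∑' n, (1 : ℝ) / b n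
      - ((∑ i ∈ range m, (∏ j ∈ range m, b j) / b i : ℕ) : ℝ)
      = (∏ i ∈ range m, b i : ℕ) * ∑' n, (1 : ℝ) / b (n + m) := by
  rw [← hs.sum_add_tsum_nat_add m, mul_add, Nat.cast_sum, mul_sum]
  have hterm : ∀ i ∈ range m, ((∏ j ∈ range m, b j : ℕ) : ℝ) * (1 / b i)
      = (((∏ j ∈ range m, b j) / b i : ℕ) : ℝ) := fun i hi => by
    rw [Nat.cast_div (dvd_prod_of_mem b hi) (Nat.cast_ne_zero.mpr (hb i hi)), mul_one_div]
  rw [sum_congr rfl hterm]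
  ring

namespace CubicGrowth

variable {b : ℕ → ℕ} {N : ℕ} (hb2 : ∀ n, 2 ≤ b n) (hcube : ∀ n, N ≤ n → b n ^ 3 ≤ b (n + 1))
include hb2 hcube

theorem two_mul_le_succ {n : ℕ} (hn : N ≤ n) : 2 * b n ≤ b (n + 1) :=
  calc 2 * b n ≤ b n ^ 2 * b n := Nat.mul_le_mul_right _ (by nlinarith [hb2 n])
    _ = b n ^ 3 := by ring
    _ ≤ b (n + 1) := hcube n hn

theorem lt_apply_add (k : ℕ) : k < b (N + k) := by
  induction k with
  | zero => exact two_pos.trans_le (hb2 N)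
  | succ k ih =>
    have := two_mul_le_succ hb2 hcube (Nat.le_add_right N k)
    rw [← add_assoc]
    omega

theorem summable_and_tsum_nat_add_le {n : ℕ} (hn : N ≤ n) :
    Summable (fun k => (1 : ℝ) / b (k + n)) ∧ ∑' k, (1 : ℝ) / b (k + n) ≤ 2 / b n := by
  have h0 : ∀ k, (0 : ℝ) ≤ 1 / b (k + n) := fun k => by positivity
  have hhalf : ∀ k, (1 : ℝ) / b (k + 1 + n) ≤ 1 / b (k + n) / 2 := fun k => by
    have hpos : (0 : ℝ) < b (k + n) := by exact_mod_cast two_pos.trans_le (hb2 _)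
    have hle : (2 * b (k + n) : ℝ) ≤ b (k + 1 + n) := by
      rw [Nat.add_right_comm]
      exact_mod_cast two_mul_le_succ hb2 hcube (hn.trans (Nat.le_add_left n k))
    rw [div_div]
    exact one_div_le_one_div_of_le (by linarith) (by linarith)
  refine ⟨summable_of_succ_le_half h0 hhalf, ?_⟩
  calc ∑' k, (1 : ℝ) / b (k + n) ≤ 2 * (1 / b (0 + n)) := tsum_le_two_mul_of_succ_le_half h0 hhalf
    _ = 2 / b n := by rw [zero_add, mul_one_div]

theorem prod_range_le {n : ℕ} (hn : N ≤ n) : ∏ i ∈ range n, b i ≤ (∏ i ∈ range N, b i) * b n := by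
  induction n, hn using Nat.le_induction with
  | base => exact Nat.le_mul_of_pos_right _ (by linarith [hb2 N])
  | succ n hn ih =>
    calc ∏ i ∈ range (n + 1), b i = (∏ i ∈ range n, b i) * b n := prod_range_succ _ _
      _ ≤ (∏ i ∈ range N, b i) * b n * b n := Nat.mul_le_mul_right _ ih
      _ ≤ (∏ i ∈ range N, b i) * b n ^ 3 := by
        rw [mul_assoc, ← sq]
        exact Nat.mul_le_mul_left _ (Nat.pow_le_pow_right (by linarith [hb2 n]) (by norm_num))
      _ ≤ (∏ i ∈ range N, b i) * b (n + 1) := Nat.mul_le_mul_left _ (hcube n hn)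

theorem mul_prod_range_succ_lt {M n : ℕ} (hn : N ≤ n) (hM : M * ∏ i ∈ range N, b i < b n) :
    M * ∏ i ∈ range (n + 1), b i < b (n + 1) :=
  calc M * ∏ i ∈ range (n + 1), b i = M * (∏ i ∈ range n, b i) * b n := by
        rw [prod_range_succ, mul_assoc]
    _ ≤ M * ((∏ i ∈ range N, b i) * b n) * b n :=
        Nat.mul_le_mul_right _ (Nat.mul_le_mul_left _ (prod_range_le hb2 hcube hn))
    _ < b n * b n * b n := by
        rw [← mul_assoc]
        have : 0 < b n := two_pos.trans_le (hb2 n)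
        exact Nat.mul_lt_mul_of_pos_right (Nat.mul_lt_mul_of_pos_right hM this) this
    _ = b n ^ 3 := by ring
    _ ≤ b (n + 1) := hcube n hn

end CubicGrowth

theorem fast_growing_sum_irrational_general (b : ℕ → ℕ)
    (hb2 : ∀ n, 2 ≤ b n) (hcube : ∃ N, ∀ n, N ≤ n → (b n) ^ 3 ≤ b (n + 1)) :
    Irrational (∑' n : ℕ, (1 : ℝ) / b n) := by
  obtain ⟨N, hN⟩ := hcube
  have hb : ∀ n, 0 < b n := fun n => two_pos.trans_le (hb2 n)
  have hs : Summable fun n => (1 : ℝ) / b n :=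
    (summable_nat_add_iff N).mp (CubicGrowth.summable_and_tsum_nat_add_le hb2 hN le_rfl).1
  refine irrational_of_forall_exists_approx fun q => ?_
  set n := N + 2 * q * ∏ i ∈ range N, b i
  have hn : N ≤ n := Nat.le_add_right _ _
  obtain ⟨hsT, hT⟩ := CubicGrowth.summable_and_tsum_nat_add_le hb2 hN (hn.trans n.le_succ)
  have hd : 2 * q * ∏ i ∈ range (n + 1), b i < b (n + 1) :=
    CubicGrowth.mul_prod_range_succ_lt hb2 hN hn (CubicGrowth.lt_apply_add hb2 hN _)
  have hsplit := prod_mul_tsum_sub_eq_prod_mul_tsum_nat_add (m := n + 1) (fun i _ => (hb i).ne') hs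
  set d := ∏ i ∈ range (n + 1), b i
  refine ⟨d, (∑ i ∈ range (n + 1), d / b i : ℕ), ?_, ?_⟩ <;> rw [Int.cast_natCast, hsplit]
  · have hd0 : (0 : ℝ) < d := by exact_mod_cast prod_pos fun i _ => hb i
    exact mul_pos hd0 (hsT.tsum_pos (fun k => by positivity) 0 (by simp [hb]))
  · calc (q : ℝ) * (d * ∑' k, (1 : ℝ) / b (k + (n + 1))) ≤ q * (d * (2 / b (n + 1))) := by gcongr
      _ = (2 * q * d : ℕ) / b (n + 1) := by push_cast; ring
      _ < 1 := by
        rw [div_lt_one (by exact_mod_cast hb _)]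
        exact_mod_cast hd

/-- If an increasing sequence of positive integers `b_n ≥ 2` satisfies
`b_{n+1} ≥ b_n^3` for all sufficiently large `n`, then `∑ 1/b_n` is irrational. -/
theorem fast_growing_sum_irrational (b : ℕ → ℕ) (hmono : StrictMono b)
    (hb2 : ∀ n, 2 ≤ b n) (hcube : ∃ N, ∀ n, N ≤ n → (b n) ^ 3 ≤ b (n + 1)) :
    Irrational (∑' n : ℕ, (1 : ℝ) / b n) :=
  fast_growing_sum_irrational_general b hb2 hcube
end
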